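/- Let V be a free ℤ-module of finite rank, with K^{p,q} = ΛᵖV ⊗ Λ^q(Λ²V) and differential d as above. Define μ : Λ²V ⊗ Λ²(Λ²V) → Λ³(Λ²V) by ω₁ ⊗ ω₂∧ω₃ ↦ ω₁∧ω₂∧ω₃. Then the composite μ ∘ d : Λ³(Λ²V) → Λ³(Λ²V) is multiplication by 3. Consequently the homology group H^{2,2}(K) has no 2-torsion. -/

import Mathlib

set_option synthInstance.maxHeartbeats 1000000
set_option maxHeartbeats 2000000

open TensorProduct ExteriorAlgebra

/-- The wedge `v₁ ∧ ⋯ ∧ vₖ`, as an element of the `k`-th exterior power `⋀[ℤ]^k M`. -/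
def wedgeι {M : Type*} [AddCommGroup M] [Module ℤ M] {k : ℕ} (v : Fin k → M) :
    ⋀[ℤ]^k M :=
  ⟨ExteriorAlgebra.ιMulti ℤ k v, ExteriorAlgebra.ιMulti_range ℤ k (Set.mem_range_self v)⟩

section Aux

variable {M : Type*} [AddCommGroup M] [Module ℤ M]

/-- The wedge, as an alternating map into the exterior power. -/
def wA (k : ℕ) : M [⋀^Fin k]→ₗ[ℤ] (⋀[ℤ]^k M : Submodule ℤ _) :=
  (ExteriorAlgebra.ιMulti ℤ k (M := M)).codRestrict _
    (fun v => ExteriorAlgebra.ιMulti_range ℤ k (Set.mem_range_self v))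

lemma wedgeι_eq_wA {k : ℕ} (v : Fin k → M) : wedgeι v = wA k v := rfl

lemma span_wedgeι (k : ℕ) :
    Submodule.span ℤ (Set.range (wedgeι (M := M) (k := k))) = ⊤ := by
  apply Submodule.map_injective_of_injective (Submodule.injective_subtype (⋀[ℤ]^k M))
  erw [Submodule.map_span, Submodule.map_top, Submodule.range_subtype]
  have : ⇑(⋀[ℤ]^k M).subtype '' Set.range (wedgeι (M := M) (k := k))
      = Set.range (ExteriorAlgebra.ιMulti ℤ k (M := M)) := by
    rw [← Set.range_comp]
    rfl
  rw [this, ExteriorAlgebra.ιMulti_span_fixedDegree]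

lemma wedgeι_swap (v : Fin 3 → M) (i j : Fin 3) (hij : i ≠ j) :
    wedgeι (v ∘ Equiv.swap i j) = - wedgeι v := by
  rw [wedgeι_eq_wA, wedgeι_eq_wA, AlternatingMap.map_swap _ _ hij]

lemma wedgeι_swap01 (ω₁ ω₂ ω₃ : M) :
    wedgeι ![ω₂, ω₁, ω₃] = - wedgeι ![ω₁, ω₂, ω₃] := by
  have h : ![ω₂, ω₁, ω₃] = ![ω₁, ω₂, ω₃] ∘ Equiv.swap (0 : Fin 3) 1 := by
    funext i; fin_cases i <;> simp [Equiv.swap_apply_def]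
  rw [h, wedgeι_swap _ _ _ (by decide)]

lemma wedgeι_rot (ω₁ ω₂ ω₃ : M) :
    wedgeι ![ω₃, ω₁, ω₂] = wedgeι ![ω₁, ω₂, ω₃] := by
  have h1 : ![ω₃, ω₁, ω₂] = ![ω₁, ω₃, ω₂] ∘ Equiv.swap (0 : Fin 3) 1 := by
    funext i; fin_cases i <;> simp [Equiv.swap_apply_def]
  have h2 : ![ω₁, ω₃, ω₂] = ![ω₁, ω₂, ω₃] ∘ Equiv.swap (1 : Fin 3) 2 := by
    funext i; fin_cases i <;> simp [Equiv.swap_apply_def]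
  rw [h1, wedgeι_swap _ _ _ (by decide), h2, wedgeι_swap _ _ _ (by decide), neg_neg]

lemma wedgeι_swap2 (x y : M) : wedgeι ![y, x] = - wedgeι ![x, y] := by
  have h : ![y, x] = ![x, y] ∘ Equiv.swap (0 : Fin 2) 1 := by
    funext i; fin_cases i <;> simp [Equiv.swap_apply_def]
  rw [h, wedgeι_eq_wA, wedgeι_eq_wA, AlternatingMap.map_swap _ _ (by decide)]

/-- An auxiliary bilinear alternating form. -/
noncomputable def dualB (f g : M →ₗ[ℤ] ℤ) : M [⋀^Fin 2]→ₗ[ℤ] ℤ :=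
  (Matrix.detRowAlternating (R := ℤ) (n := Fin 2)).compLinearMap (LinearMap.pi ![f, g])

lemma dualB_apply (f g : M →ₗ[ℤ] ℤ) (x y : M) :
    dualB f g ![x, y] = f x * g y - g x * f y := by
  show Matrix.det (Matrix.of fun r c => ![f, g] c (![x, y] r)) = _
  rw [Matrix.det_fin_two]
  simp

/-- An auxiliary linear functional on the second exterior power. -/
noncomputable def dualφ (f g : M →ₗ[ℤ] ℤ) : (⋀[ℤ]^2 M : Submodule ℤ _) →ₗ[ℤ] ℤ :=
  (ExteriorAlgebra.liftAlternating (Pi.single 2 (dualB f g))) ∘ₗ (⋀[ℤ]^2 M).subtype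

lemma dualφ_wedge (f g : M →ₗ[ℤ] ℤ) (v : Fin 2 → M) :
    dualφ f g (wedgeι v) = dualB f g v := by
  have : ((⋀[ℤ]^2 M).subtype (wedgeι v)) = ExteriorAlgebra.ιMulti ℤ 2 v := rfl
  show ExteriorAlgebra.liftAlternating _ ((⋀[ℤ]^2 M).subtype (wedgeι v)) = _
  rw [this, ExteriorAlgebra.liftAlternating_apply_ιMulti, Pi.single_eq_same]

end Aux

section Basis2

variable (M : Type*) [AddCommGroup M] [Module ℤ M] [Module.Free ℤ M] [Module.Finite ℤ M]

/-- A basis of `M` indexed by `Fin (rank)`. -/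
noncomputable def bB : Module.Basis (Fin (Module.finrank ℤ M)) ℤ M := Module.finBasis ℤ M

/-- Index set for the basis of `⋀² M`. -/
abbrev Sidx := {p : Fin (Module.finrank ℤ M) × Fin (Module.finrank ℤ M) // p.1 < p.2}

/-- The candidate basis family of `⋀² M`. -/
noncomputable def wFam : Sidx M → (⋀[ℤ]^2 M : Submodule ℤ _) :=
  fun s => wedgeι ![bB M s.1.1, bB M s.1.2]

/-- The dual family of functionals. -/
noncomputable def φFam : Sidx M → ((⋀[ℤ]^2 M : Submodule ℤ _) →ₗ[ℤ] ℤ) :=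
  fun s => dualφ ((bB M).coord s.1.1) ((bB M).coord s.1.2)

lemma pairing (s t : Sidx M) : φFam M s (wFam M t) = if s = t then 1 else 0 := by
  obtain ⟨⟨k, l⟩, hkl⟩ := s
  obtain ⟨⟨i, j⟩, hij⟩ := t
  have hkl' : k < l := hkl
  have hij' : i < j := hij
  simp only [φFam, wFam, dualφ_wedge, dualB_apply, Module.Basis.coord_apply, Module.Basis.repr_self,
    Finsupp.single_apply, Subtype.ext_iff, Prod.ext_iff]
  by_cases h1 : i = k <;> by_cases h2 : j = l <;> by_cases h3 : i = l <;> by_cases h4 : j = k <;>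
    simp [h1, h2, h3, h4] <;> omega

lemma span_wFam : Submodule.span ℤ (Set.range (wFam M)) = ⊤ := by
  rw [eq_top_iff, ← span_wedgeι (M := M) 2, Submodule.span_le]
  rintro _ ⟨v, rfl⟩
  rw [wedgeι_eq_wA]
  have hv := funext fun r => ((bB M).sum_repr (v r)).symm
  rw [congrArg (⇑(wA (M := M) 2)) hv]
  show (wA (M := M) 2).toMultilinearMap _ ∈ _
  rw [MultilinearMap.map_sum]
  apply Submodule.sum_mem; intro r _
  show (wA (M := M) 2).toMultilinearMap _ ∈ _
  rw [MultilinearMap.map_smul_univ]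
  apply Submodule.smul_mem
  have hb : (fun i => bB M (r i)) = ![bB M (r 0), bB M (r 1)] := by
    funext i; fin_cases i <;> rfl
  show wA 2 (fun i => bB M (r i)) ∈ _
  rw [← wedgeι_eq_wA, hb]
  rcases lt_trichotomy (r 0) (r 1) with h | h | h
  · exact Submodule.subset_span ⟨⟨(r 0, r 1), h⟩, rfl⟩
  · rw [h]
    have hz : wedgeι ![bB M (r 1), bB M (r 1)] = 0 := by
      rw [wedgeι_eq_wA]
      exact AlternatingMap.map_eq_zero_of_eq _ _ (i := 0) (j := 1) (by simp) (by decide)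
    rw [hz]; exact Submodule.zero_mem _
  · rw [wedgeι_swap2]
    exact Submodule.neg_mem _ (Submodule.subset_span ⟨⟨(r 1, r 0), h⟩, rfl⟩)

lemma indep_wFam : LinearIndependent ℤ (wFam M) := by
  rw [Fintype.linearIndependent_iff]
  intro g hg s
  have h := congrArg (φFam M s) hg
  rw [map_sum, map_zero] at h
  simp only [map_smul, pairing, smul_eq_mul, mul_ite, mul_one, mul_zero,
    Finset.sum_ite_eq, Finset.mem_univ, if_true] at h
  exact h

/-- A basis of the second exterior power of a finite free `ℤ`-module. -/
noncomputable def basis2 : Module.Basis (Sidx M) ℤ (⋀[ℤ]^2 M : Submodule ℤ _) :=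
  Module.Basis.mk (indep_wFam M) (by rw [span_wFam])

lemma free2 : Module.Free ℤ (⋀[ℤ]^2 M : Submodule ℤ _) := Module.Free.of_basis (basis2 M)

lemma finite2 : Module.Finite ℤ (⋀[ℤ]^2 M : Submodule ℤ _) := Module.Finite.of_basis (basis2 M)

end Basis2

theorem stmt13 (V : Type) [AddCommGroup V] [Module ℤ V]
    [Module.Free ℤ V] [Module.Finite ℤ V]
    (d : (⋀[ℤ]^3 (⋀[ℤ]^2 V) : Submodule ℤ _) →ₗ[ℤ]
      ((⋀[ℤ]^2 V : Submodule ℤ _) ⊗[ℤ] (⋀[ℤ]^2 (⋀[ℤ]^2 V) : Submodule ℤ _)))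
    (μ : ((⋀[ℤ]^2 V : Submodule ℤ _) ⊗[ℤ] (⋀[ℤ]^2 (⋀[ℤ]^2 V) : Submodule ℤ _)) →ₗ[ℤ]
      (⋀[ℤ]^3 (⋀[ℤ]^2 V) : Submodule ℤ _))
    (d' : ((⋀[ℤ]^2 V : Submodule ℤ _) ⊗[ℤ] (⋀[ℤ]^2 (⋀[ℤ]^2 V) : Submodule ℤ _)) →ₗ[ℤ]
      ((⋀[ℤ]^4 V : Submodule ℤ _) ⊗[ℤ] (⋀[ℤ]^2 V : Submodule ℤ _)))
    (hd : ∀ ω₁ ω₂ ω₃ : ⋀[ℤ]^2 V,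
      d (wedgeι ![ω₁, ω₂, ω₃])
        = ω₁ ⊗ₜ wedgeι ![ω₂, ω₃] - ω₂ ⊗ₜ wedgeι ![ω₁, ω₃] + ω₃ ⊗ₜ wedgeι ![ω₁, ω₂])
    (hμ : ∀ ω₁ ω₂ ω₃ : ⋀[ℤ]^2 V,
      μ (ω₁ ⊗ₜ wedgeι ![ω₂, ω₃]) = wedgeι ![ω₁, ω₂, ω₃])
    (hd' : ∀ a b c : Fin 2 → V,
      d' (wedgeι a ⊗ₜ wedgeι ![wedgeι b, wedgeι c])
        = wedgeι (Fin.append a b) ⊗ₜ wedgeι c - wedgeι (Fin.append a c) ⊗ₜ wedgeι b)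
    (hchain : ∀ x, d' (d x) = 0) :
    (∀ x, μ (d x) = (3 : ℤ) • x) ∧
    (∀ h : (LinearMap.ker d') ⧸
        ((LinearMap.range d).comap (LinearMap.ker d').subtype),
      (2 : ℤ) • h = 0 → h = 0) := by
  haveI : Module.Free ℤ (⋀[ℤ]^2 V : Submodule ℤ _) := free2 V
  haveI : Module.Finite ℤ (⋀[ℤ]^2 V : Submodule ℤ _) := finite2 V
  haveI : Module.Free ℤ (⋀[ℤ]^2 (⋀[ℤ]^2 V : Submodule ℤ _) : Submodule ℤ _) := free2 _
  have hμd : ∀ x, μ (d x) = (3 : ℤ) • x := by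
    have key : ∀ v : Fin 3 → (⋀[ℤ]^2 V : Submodule ℤ _),
        μ (d (wedgeι v)) = (3 : ℤ) • wedgeι v := by
      intro v
      have hv : v = ![v 0, v 1, v 2] := by funext i; fin_cases i <;> rfl
      rw [hv, hd]
      erw [map_add, map_sub, hμ, hμ, hμ]
      rw [
        wedgeι_swap01 (v 0) (v 1) (v 2), wedgeι_rot (v 0) (v 1) (v 2)]
      module
    intro x
    have hx : x ∈ Submodule.span ℤ
        (Set.range (wedgeι (M := (⋀[ℤ]^2 V : Submodule ℤ _)) (k := 3))) := by
      rw [span_wedgeι]; trivial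
    induction hx using Submodule.span_induction with
    | mem y hy => obtain ⟨v, rfl⟩ := hy; exact key v
    | zero => simp
    | add y z _ _ hy hz => rw [map_add, map_add, hy, hz, smul_add]
    | smul c y _ hy => rw [map_smul, map_smul, hy, smul_comm]
  refine ⟨hμd, ?_⟩
  intro h
  induction h using Quotient.ind with
  | _ z =>
    intro h2
    obtain ⟨x, hx⟩ := z
    have h2' : ((2 : ℤ) • (⟨x, hx⟩ : LinearMap.ker d')) ∈
        ((LinearMap.range d).comap (LinearMap.ker d').subtype) :=
      (Submodule.Quotient.mk_eq_zero _).mp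
        ((Submodule.Quotient.mk_smul _ (2 : ℤ) _).trans h2)
    rw [Submodule.mem_comap] at h2'
    obtain ⟨y, hy⟩ := h2'
    have hy' : d y = (2 : ℤ) • x := hy
    have h6 : (2 : ℤ) • (d (μ x)) = (2 : ℤ) • ((3 : ℤ) • x) := by
      calc (2 : ℤ) • d (μ x) = d (μ ((2 : ℤ) • x)) := by rw [map_smul, map_smul]
      _ = d (μ (d y)) := by rw [hy']
      _ = d ((3 : ℤ) • y) := by rw [hμd y]
      _ = (3 : ℤ) • d y := by rw [map_smul]
      _ = (3 : ℤ) • ((2 : ℤ) • x) := by rw [hy']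
      _ = (2 : ℤ) • ((3 : ℤ) • x) := smul_comm _ _ _
    have h3 : d (μ x) = (3 : ℤ) • x :=
      have : Module.IsTorsionFree ℤ ((⋀[ℤ]^2 V : Submodule ℤ _) ⊗[ℤ] (⋀[ℤ]^2 (⋀[ℤ]^2 V) : Submodule ℤ _)) :=
        have : Module.Free ℤ ((⋀[ℤ]^2 V : Submodule ℤ _) ⊗[ℤ] (⋀[ℤ]^2 (⋀[ℤ]^2 V) : Submodule ℤ _)) :=
          @Module.Free.tensor ℤ ℤ _ _ _ _ _ _ _ _ _ _ _ (free2 V) (free2 _)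
        inferInstance
      smul_right_injective _ (by norm_num : (2 : ℤ) ≠ 0) h6
    have key2 : d (μ x - y) = x := by
      rw [map_sub, h3, hy']
      module
    have hmem : (⟨x, hx⟩ : LinearMap.ker d') ∈
        ((LinearMap.range d).comap (LinearMap.ker d').subtype) :=
      Submodule.mem_comap.mpr ⟨μ x - y, key2⟩
    exact (Submodule.Quotient.mk_eq_zero _).mpr hmem
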